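/- arXiv:1909.00163 — 3 statements merged into one kernel-verified Lean document; each statement's English description precedes it below -/
import Mathlib

section
/- For all real α with Re α > 0 and q with |arg q| < π/4, the Laplace transform identity ∫₀^∞ (1 - erf(q/(2√t))) e^{-αt} dt = (1/α) e^{-q√α} holds, where erf(x) = (2/√π) ∫₀^x e^{-z²} dz. -/
open MeasureTheory Real Set

noncomputable def erf (x : ℝ) : ℝ := (2 / Real.sqrt π) * ∫ z in (0:ℝ)..x, Real.exp (-z ^ 2)

/-!
Since `1 - erf x = (2/√π) ∫ₓ^∞ e^{-z²} dz`, the left side is `2/√π` times the integral of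
`e^{-αt} e^{-z²}` over the region `q < 2 z √t` of the quarter plane. Integrating in `t` first
leaves `(2/(α√π)) ∫₀^∞ exp(-(z² + (c/z)²)) dz` with `c = q√α/2`. This last integral is
`(√π/2) e^{-2c}`: the substitution `u = z - c/z` turns `(1 + c/z²)` times the integrand, whose
exponent is `-(z - c/z)² - 2c`, into a Gaussian, and `z ↦ c/z` shows that the two halves of
`(1 + c/z²)` contribute equally.
-/

theorem integral_integral_slice_swap {α β E : Type*} [MeasurableSpace α] [MeasurableSpace β]
    [NormedAddCommGroup E] [NormedSpace ℝ E] {μ : Measure α} {ν : Measure β} [SFinite μ]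
    [SFinite ν] {S : Set (α × β)} (hS : MeasurableSet S) {F : α × β → E}
    (hF : IntegrableOn F S (μ.prod ν)) :
    ∫ x, ∫ y in {y | (x, y) ∈ S}, F (x, y) ∂ν ∂μ = ∫ y, ∫ x in {x | (x, y) ∈ S}, F (x, y) ∂μ ∂ν := by
  have key := integral_integral_swap (f := fun x y => S.indicator F (x, y))
    ((integrable_indicator_iff hS).2 hF)
  convert key using 3 with x y
  · exact (integral_indicator (measurable_prodMk_left hS)).symm
  · exact (integral_indicator (measurable_prodMk_right hS)).symm

section Substitution

variable {E : Type*} [NormedAddCommGroup E] [NormedSpace ℝ E] {c : ℝ}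

theorem hasDerivAt_const_div {z : ℝ} (hz : z ≠ 0) :
    HasDerivAt (fun z : ℝ => c / z) (-(c / z ^ 2)) z := by
  simpa [div_eq_mul_inv] using (hasDerivAt_inv hz).const_mul c

theorem image_const_div_Ioi (hc : 0 < c) : (fun z : ℝ => c / z) '' Ioi 0 = Ioi 0 := by
  ext u
  refine ⟨?_, fun hu => ⟨c / u, div_pos hc hu, div_div_cancel₀ hc.ne'⟩⟩
  rintro ⟨z, hz, rfl⟩
  exact div_pos hc hz

theorem injOn_const_div_Ioi (hc : 0 < c) : InjOn (fun z : ℝ => c / z) (Ioi 0) :=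
  fun a _ b _ h => inv_injective (mul_left_cancel₀ hc.ne' (by simpa only [div_eq_mul_inv] using h))

theorem integrableOn_Ioi_comp_const_div_iff (hc : 0 < c) (g : ℝ → E) :
    IntegrableOn (fun z => (c / z ^ 2) • g (c / z)) (Ioi 0) ↔ IntegrableOn g (Ioi 0) := by
  have h := integrableOn_image_iff_integrableOn_abs_deriv_smul measurableSet_Ioi
    (fun z hz => (hasDerivAt_const_div (ne_of_gt hz)).hasDerivWithinAt) (injOn_const_div_Ioi hc) g
  rw [image_const_div_Ioi hc] at h
  rw [h]
  refine integrableOn_congr_fun (fun z hz => ?_) measurableSet_Ioi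
  simp [abs_of_pos (div_pos hc (pow_pos hz 2))]

theorem integral_Ioi_comp_const_div (hc : 0 < c) (g : ℝ → E) :
    ∫ z in Ioi 0, (c / z ^ 2) • g (c / z) = ∫ z in Ioi 0, g z := by
  have h := integral_image_eq_integral_abs_deriv_smul measurableSet_Ioi
    (fun z hz => (hasDerivAt_const_div (ne_of_gt hz)).hasDerivWithinAt) (injOn_const_div_Ioi hc) g
  rw [image_const_div_Ioi hc] at h
  rw [h]
  refine setIntegral_congr_fun measurableSet_Ioi (fun z hz => ?_)
  simp [abs_of_pos (div_pos hc (pow_pos hz 2))]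

theorem image_sub_const_div_Ioi (hc : 0 < c) : (fun z : ℝ => z - c / z) '' Ioi 0 = univ := by
  refine eq_univ_of_forall fun u => ?_
  set s := √(u ^ 2 + 4 * c)
  have hs : s ^ 2 = u ^ 2 + 4 * c := sq_sqrt (by positivity)
  have hu : |u| < s := by
    rw [← sqrt_sq_eq_abs]
    exact sqrt_lt_sqrt (sq_nonneg u) (by linarith)
  have hz : 0 < (u + s) / 2 := by linarith [neg_abs_le u]
  have hdiv : c / ((u + s) / 2) = (s - u) / 2 := by
    rw [div_eq_iff hz.ne']
    linear_combination -hs / 4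
  refine ⟨(u + s) / 2, hz, ?_⟩
  simp only [hdiv]
  ring

theorem hasDerivAt_sub_const_div {z : ℝ} (hz : z ≠ 0) :
    HasDerivAt (fun z : ℝ => z - c / z) (1 + c / z ^ 2) z :=
  ((hasDerivAt_id' z).sub (hasDerivAt_const_div hz)).congr_deriv (by ring)

theorem injOn_sub_const_div_Ioi (hc : 0 < c) : InjOn (fun z : ℝ => z - c / z) (Ioi 0) := by
  intro a (ha : 0 < a) b (hb : 0 < b) hab
  field_simp at hab
  have : (a - b) * (a * b + c) = 0 := by linear_combination hab
  nlinarith [mul_pos ha hb]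

theorem integral_Ioi_comp_sub_const_div (hc : 0 < c) (g : ℝ → E) :
    ∫ z in Ioi 0, (1 + c / z ^ 2) • g (z - c / z) = ∫ u, g u := by
  have h := integral_image_eq_integral_abs_deriv_smul measurableSet_Ioi
    (fun z hz => (hasDerivAt_sub_const_div (ne_of_gt hz)).hasDerivWithinAt)
    (injOn_sub_const_div_Ioi hc) g
  rw [image_sub_const_div_Ioi hc, setIntegral_univ] at h
  rw [h]
  refine setIntegral_congr_fun measurableSet_Ioi (fun z (hz : 0 < z) => ?_)
  have : 0 < 1 + c / z ^ 2 := by positivity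
  simp [abs_of_pos this]

end Substitution

theorem integral_Ioi_exp_neg_sq_add_div_sq {c : ℝ} (hc : 0 < c) :
    ∫ z in Ioi 0, exp (-(z ^ 2 + (c / z) ^ 2)) = √π / 2 * exp (-(2 * c)) := by
  set h : ℝ → ℝ := fun z => exp (-(z ^ 2 + (c / z) ^ 2))
  have h_int : IntegrableOn h (Ioi 0) := by
    refine (integrable_exp_neg_mul_sq one_pos).integrableOn.mono'
      (Measurable.aestronglyMeasurable (by fun_prop)) (Filter.Eventually.of_forall fun z => ?_)
    rw [norm_of_nonneg (exp_pos _).le, exp_le_exp]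
    nlinarith [sq_nonneg (c / z)]
  have h_expand : ∀ z ∈ Ioi (0 : ℝ), (1 + c / z ^ 2) • exp (-(z - c / z) ^ 2)
      = exp (2 * c) * (h z + (c / z ^ 2) • h (c / z)) := fun z hz => by
    have hz : z ≠ 0 := ne_of_gt hz
    have h_sq : exp (-(z - c / z) ^ 2) = exp (2 * c) * h z := by
      rw [← exp_add]
      congr 1
      field_simp
      ring
    simp only [smul_eq_mul, h_sq, h, div_div_cancel₀ hc.ne', add_comm ((c / z) ^ 2)]
    ring
  have key : √π = exp (2 * c) * (2 * ∫ z in Ioi 0, h z) := calc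
    √π = ∫ u, exp (-u ^ 2) := by simpa using (integral_gaussian 1).symm
    _ = ∫ z in Ioi 0, (1 + c / z ^ 2) • exp (-(z - c / z) ^ 2) :=
      (integral_Ioi_comp_sub_const_div hc _).symm
    _ = ∫ z in Ioi 0, exp (2 * c) * (h z + (c / z ^ 2) • h (c / z)) :=
      setIntegral_congr_fun measurableSet_Ioi h_expand
    _ = exp (2 * c) * (2 * ∫ z in Ioi 0, h z) := by
      rw [integral_const_mul, integral_add h_int ((integrableOn_Ioi_comp_const_div_iff hc h).2 h_int),
        integral_Ioi_comp_const_div hc]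
      ring
  rw [exp_neg, key]
  field_simp

theorem one_sub_erf (x : ℝ) : 1 - erf x = 2 / √π * ∫ z in Ioi x, exp (-z ^ 2) := by
  have h_int : ∀ a : ℝ, IntegrableOn (fun z => exp (-z ^ 2)) (Ioi a) := fun a => by
    simpa using (integrable_exp_neg_mul_sq one_pos).integrableOn
  have h_gauss : ∫ z in Ioi (0 : ℝ), exp (-z ^ 2) = √π / 2 := by
    simpa using integral_gaussian_Ioi 1
  rw [erf, ← intervalIntegral.integral_Ioi_sub_Ioi' (h_int 0) (h_int x), h_gauss]
  field_simp
  ring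

theorem pos_and_pos_of_lt_two_mul_mul_sqrt {q z t : ℝ} (hq : 0 ≤ q) (h : q < 2 * z * √t) :
    0 < z ∧ 0 < t := by
  have ht : 0 < √t := by
    by_contra! ht
    rw [le_antisymm ht (sqrt_nonneg t), mul_zero] at h
    linarith
  exact ⟨by nlinarith, sqrt_pos.1 ht⟩

theorem setOf_lt_two_mul_mul_sqrt_of_pos_left {q t : ℝ} (ht : 0 < t) :
    {z : ℝ | q < 2 * z * √t} = Ioi (q / (2 * √t)) := by
  ext z
  rw [mem_ofPred_eq, mem_Ioi, div_lt_iff₀ (by positivity)]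
  exact ⟨fun h => by linarith, fun h => by linarith⟩

theorem setOf_lt_two_mul_mul_sqrt_of_pos_right {q z : ℝ} (hq : 0 < q) (hz : 0 < z) :
    {t : ℝ | q < 2 * z * √t} = Ioi ((q / (2 * z)) ^ 2) := by
  ext t
  rw [mem_ofPred_eq, mem_Ioi, ← lt_sqrt (by positivity), div_lt_iff₀ (by positivity)]
  exact ⟨fun h => by linarith, fun h => by linarith⟩

theorem one_sub_erf_mul_exp_eq_setIntegral (α : ℝ) {q t : ℝ} (ht : 0 < t) :
    (1 - erf (q / (2 * √t))) * exp (-α * t)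
      = 2 / √π * ∫ z in {z | q < 2 * z * √t}, exp (-α * t) * exp (-z ^ 2) := by
  rw [setOf_lt_two_mul_mul_sqrt_of_pos_left ht, integral_const_mul, one_sub_erf]
  ring

theorem setIntegral_exp_mul_exp_eq {α q z : ℝ} (hα : 0 < α) (hq : 0 < q) (hz : 0 < z) :
    ∫ t in {t | q < 2 * z * √t}, exp (-α * t) * exp (-z ^ 2)
      = exp (-(z ^ 2 + (q * √α / 2 / z) ^ 2)) / α := by
  have h_sq : (q * √α / 2 / z) ^ 2 = α * (q / (2 * z)) ^ 2 := by
    rw [div_div, mul_comm q, mul_div_assoc, mul_pow, sq_sqrt hα.le]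
  rw [setOf_lt_two_mul_mul_sqrt_of_pos_right hq hz, integral_mul_const,
    integral_exp_mul_Ioi (neg_neg_of_pos hα), neg_div_neg_eq, div_mul_eq_mul_div, ← exp_add, h_sq]
  ring_nf

/-- Laplace transform identity:
∫₀^∞ (1 - erf(q/(2√t))) e^{-αt} dt = (1/α) e^{-q√α} for α > 0, q > 0. -/
theorem stmt0 (α q : ℝ) (hα : 0 < α) (hq : 0 < q) :
    ∫ t in Ioi (0:ℝ), (1 - erf (q / (2 * Real.sqrt t))) * Real.exp (-α * t)
      = (1 / α) * Real.exp (-q * Real.sqrt α) := by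
  have h_pos : ∀ {t z : ℝ}, q < 2 * z * √t → 0 < z ∧ 0 < t :=
    pos_and_pos_of_lt_two_mul_mul_sqrt hq.le
  have hS : MeasurableSet {p : ℝ × ℝ | q < 2 * p.2 * √p.1} :=
    measurableSet_lt measurable_const (by fun_prop)
  have hK : IntegrableOn (fun p : ℝ × ℝ => exp (-α * p.1) * exp (-p.2 ^ 2))
      {p | q < 2 * p.2 * √p.1} (volume.prod volume) := by
    have h := (exp_neg_integrableOn_Ioi 0 hα).mul_prod
      (by simpa using integrable_exp_neg_mul_sq one_pos : Integrable fun z : ℝ => exp (-z ^ 2))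
    rw [Measure.restrict_prod_eq_prod_univ] at h
    exact IntegrableOn.mono_set h fun p hp => ⟨(h_pos hp).2, mem_univ _⟩
  have h_empty_left : ∀ t ∉ Ioi (0 : ℝ), {z : ℝ | q < 2 * z * √t} = ∅ := fun t ht =>
    eq_empty_of_forall_notMem fun z hz => ht (h_pos hz).2
  have h_empty_right : ∀ z ∉ Ioi (0 : ℝ), {t : ℝ | q < 2 * z * √t} = ∅ := fun z hz =>
    eq_empty_of_forall_notMem fun t ht => hz (h_pos ht).1
  calc ∫ t in Ioi 0, (1 - erf (q / (2 * √t))) * exp (-α * t)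
      = 2 / √π * ∫ t, ∫ z in {z | q < 2 * z * √t}, exp (-α * t) * exp (-z ^ 2) := by
        rw [setIntegral_congr_fun measurableSet_Ioi
          fun t ht => one_sub_erf_mul_exp_eq_setIntegral α ht, integral_const_mul,
          setIntegral_eq_integral_of_forall_compl_eq_zero fun t ht => by
            rw [h_empty_left t ht, setIntegral_empty]]
    _ = 2 / √π * ∫ z, ∫ t in {t | q < 2 * z * √t}, exp (-α * t) * exp (-z ^ 2) := by
        congr 1
        exact integral_integral_slice_swap hS hK
    _ = 2 / √π * ∫ z in Ioi 0, exp (-(z ^ 2 + (q * √α / 2 / z) ^ 2)) / α := by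
        rw [← setIntegral_eq_integral_of_forall_compl_eq_zero (s := Ioi 0) fun z hz => by
            rw [h_empty_right z hz, setIntegral_empty],
          setIntegral_congr_fun measurableSet_Ioi fun z hz => setIntegral_exp_mul_exp_eq hα hq hz]
    _ = 1 / α * exp (-q * √α) := by
        rw [integral_div, integral_Ioi_exp_neg_sq_add_div_sq (by positivity)]
        field_simp
end

section
/- For all real α > 0 and all real a ≥ 0, ∫₀^∞ t · e^{-αt} · e^{-a²/(2t)} / √(2πt) dt = e^{-√(2α)·a} · (1/(2α√(2α)) + a/(2α)). -/
/-!
Substituting `t = s²` turns the integral into `(2/√(2π)) e^{-2rb} ∫₀^∞ s² e^{-φ(s)²} ds` with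
`r = √α`, `b = a/√2` and `φ(s) = r s - b/s`. The Cauchy–Schlömilch substitution `u = φ(s)` gives
`∫₀^∞ (r + b/s²) e^{-φ²} = √π`, and the involution `s ↦ b/(r s)`, which reverses the sign of `φ`,
shows that the two halves of the weight `r + b/s²` contribute equally; hence
`∫₀^∞ e^{-φ²} = √π/(2r)` and `∫₀^∞ (b/s)² e^{-φ²} = b√π/2`. Finally `s e^{-φ²}` vanishes at both
ends of `(0, ∞)`, and integrating its derivative gives
`∫ e^{-φ²} - 2r² ∫ s² e^{-φ²} + 2 ∫ (b/s)² e^{-φ²} = 0`, which determines the second moment.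
-/

open MeasureTheory Real Set Filter Topology

theorem integral_comp_sq_Ioi (g : ℝ → ℝ) :
    ∫ s in Ioi (0:ℝ), 2 * s * g (s ^ 2) = ∫ t in Ioi (0:ℝ), g t := by
  rw [← integral_comp_rpow_Ioi_of_pos (g := g) two_pos]
  refine setIntegral_congr_fun measurableSet_Ioi fun s _ => ?_
  rw [show (2:ℝ) - 1 = 1 by norm_num, rpow_one, rpow_two, smul_eq_mul]

theorem integral_comp_div_Ioi (g : ℝ → ℝ) {c : ℝ} (hc : 0 < c) :
    ∫ s in Ioi (0:ℝ), c / s ^ 2 * g (c / s) = ∫ s in Ioi (0:ℝ), g s := by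
  have h := integral_comp_mul_left_Ioi g 0 hc
  rw [mul_zero, ← integral_comp_rpow_Ioi _ (neg_ne_zero.mpr one_ne_zero), smul_eq_mul,
    eq_inv_mul_iff_mul_eq₀ hc.ne', ← integral_const_mul] at h
  rw [← h]
  refine setIntegral_congr_fun measurableSet_Ioi fun s (hs : 0 < s) => ?_
  rw [show (-1:ℝ) - 1 = -2 by norm_num, rpow_neg hs.le, rpow_neg_one, smul_eq_mul, abs_neg,
    abs_one, rpow_two]
  field_simp

section
variable {r b : ℝ}

theorem hasDerivAt_mul_sub_div {s : ℝ} (hs : s ≠ 0) :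
    HasDerivAt (fun s => r * s - b / s) (r + b / s ^ 2) s := by
  have hlin : HasDerivAt (fun s => r * s) r s := by simpa using (hasDerivAt_id s).const_mul r
  have hdiv : HasDerivAt (fun s => b / s) (-(b / s ^ 2)) s := by
    simpa [div_eq_mul_inv] using (hasDerivAt_inv hs).const_mul b
  exact (hlin.fun_sub hdiv).congr_deriv (by ring)

theorem image_mul_sub_div_Ioi (hr : 0 < r) (hb : 0 < b) :
    (fun s => r * s - b / s) '' Ioi 0 = univ := by
  refine eq_univ_of_forall fun y => ?_
  obtain ⟨D, hD, hD2⟩ : ∃ D, 0 ≤ D ∧ D ^ 2 = y ^ 2 + 4 * r * b :=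
    ⟨_, sqrt_nonneg _, sq_sqrt (by positivity)⟩
  have hyD : 0 < y + D := by nlinarith
  refine ⟨(y + D) / (2 * r), div_pos hyD (by positivity), ?_⟩
  field_simp
  linear_combination hD2

theorem injOn_mul_sub_div_Ioi (hr : 0 < r) (hb : 0 ≤ b) :
    InjOn (fun s => r * s - b / s) (Ioi 0) := by
  refine StrictMonoOn.injOn fun s hs t _ hst => ?_
  have : b / t ≤ b / s := div_le_div_of_nonneg_left hb hs hst.le
  nlinarith

theorem integral_comp_mul_sub_div_Ioi (g : ℝ → ℝ) (hr : 0 < r) (hb : 0 < b) :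
    ∫ s in Ioi (0:ℝ), (r + b / s ^ 2) * g (r * s - b / s) = ∫ u, g u := by
  have h := integral_image_eq_integral_abs_deriv_smul measurableSet_Ioi
    (fun s hs => (hasDerivAt_mul_sub_div (ne_of_gt hs)).hasDerivWithinAt)
    (injOn_mul_sub_div_Ioi hr hb.le) g
  rw [image_mul_sub_div_Ioi hr hb, setIntegral_univ] at h
  rw [h]
  refine setIntegral_congr_fun measurableSet_Ioi fun s (hs : 0 < s) => ?_
  rw [smul_eq_mul, abs_of_pos (by positivity)]

theorem mul_div_div_sub_div_div (hr : r ≠ 0) (hb : b ≠ 0) {s : ℝ} (hs : s ≠ 0) :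
    r * (b / r / s) - b / (b / r / s) = -(r * s - b / s) := by
  field_simp
  ring

theorem exp_neg_sq_mul_sub_div {s : ℝ} (hs : s ≠ 0) :
    exp (-(r * s - b / s) ^ 2)
      = exp (2 * r * b) * exp (-r ^ 2 * s ^ 2) * exp (-(b / s) ^ 2) := by
  rw [← exp_add, ← exp_add]
  congr 1
  field_simp
  ring

theorem integrableOn_mul_exp_neg_sq_mul_sub_div {w : ℝ → ℝ} (hr : r ≠ 0) (hw : Measurable w)
    (n : ℕ) (C : ℝ) (hwC : ∀ s > 0, |w s| * exp (-(b / s) ^ 2) ≤ C * s ^ n) :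
    IntegrableOn (fun s => w s * exp (-(r * s - b / s) ^ 2)) (Ioi 0) := by
  have hdom := (integrableOn_rpow_mul_exp_neg_mul_sq (pow_pos (abs_pos.mpr hr) 2)
    (show (-1:ℝ) < n by linarith [n.cast_nonneg (α := ℝ)])).const_mul (exp (2 * r * b) * C)
  refine hdom.mono' (hw.mul (by fun_prop)).aestronglyMeasurable ?_
  filter_upwards [ae_restrict_mem measurableSet_Ioi] with s (hs : 0 < s)
  rw [norm_mul, norm_of_nonneg (exp_pos _).le, exp_neg_sq_mul_sub_div hs.ne', sq_abs,
    rpow_natCast, norm_eq_abs]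
  calc |w s| * (exp (2 * r * b) * exp (-r ^ 2 * s ^ 2) * exp (-(b / s) ^ 2))
      = exp (2 * r * b) * exp (-r ^ 2 * s ^ 2) * (|w s| * exp (-(b / s) ^ 2)) := by ring
    _ ≤ exp (2 * r * b) * exp (-r ^ 2 * s ^ 2) * (C * s ^ n) :=
        mul_le_mul_of_nonneg_left (hwC s hs) (by positivity)
    _ = exp (2 * r * b) * C * (s ^ n * exp (-r ^ 2 * s ^ 2)) := by ring

theorem integrableOn_pow_mul_exp_neg_sq_mul_sub_div (hr : r ≠ 0) (n : ℕ) :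
    IntegrableOn (fun s => s ^ n * exp (-(r * s - b / s) ^ 2)) (Ioi 0) := by
  refine integrableOn_mul_exp_neg_sq_mul_sub_div hr (by fun_prop) n 1 fun s hs => ?_
  rw [abs_of_pos (by positivity), one_mul]
  exact mul_le_of_le_one_right (by positivity) (exp_le_one_iff.mpr (by nlinarith))

theorem integrableOn_div_sq_mul_exp_neg_sq_mul_sub_div (hr : r ≠ 0) :
    IntegrableOn (fun s => (b / s) ^ 2 * exp (-(r * s - b / s) ^ 2)) (Ioi 0) := by
  refine integrableOn_mul_exp_neg_sq_mul_sub_div hr (by fun_prop) 0 1 fun s _ => ?_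
  rw [abs_of_nonneg (by positivity), pow_zero, one_mul]
  exact (mul_exp_neg_le_exp_neg_one _).trans (exp_le_one_iff.mpr (by norm_num))

theorem integral_exp_neg_sq_mul_sub_div (hr : 0 < r) (hb : 0 ≤ b) :
    ∫ s in Ioi (0:ℝ), exp (-(r * s - b / s) ^ 2) = √π / (2 * r) := by
  rcases hb.eq_or_lt with rfl | hb
  · simp_rw [zero_div, sub_zero, mul_pow, ← neg_mul]
    rw [integral_gaussian_Ioi, sqrt_div' _ (by positivity), sqrt_sq hr.le]
    ring
  have hsym : ∫ s in Ioi (0:ℝ), b / s ^ 2 * exp (-(r * s - b / s) ^ 2)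
      = ∫ s in Ioi (0:ℝ), r * exp (-(r * s - b / s) ^ 2) := by
    rw [← integral_comp_div_Ioi (fun s => r * exp (-(r * s - b / s) ^ 2)) (div_pos hb hr)]
    refine setIntegral_congr_fun measurableSet_Ioi fun s (hs : 0 < s) => ?_
    rw [mul_div_div_sub_div_div hr.ne' hb.ne' hs.ne', neg_sq]
    field_simp
  have hK0 : IntegrableOn (fun s => exp (-(r * s - b / s) ^ 2)) (Ioi 0) := by
    simpa using integrableOn_pow_mul_exp_neg_sq_mul_sub_div (b := b) hr.ne' 0
  have hKb : IntegrableOn (fun s => b / s ^ 2 * exp (-(r * s - b / s) ^ 2)) (Ioi 0) :=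
    IntegrableOn.congr_fun ((integrableOn_div_sq_mul_exp_neg_sq_mul_sub_div hr.ne').const_mul b⁻¹)
      (fun s _ => by field_simp) measurableSet_Ioi
  have hgauss : ∫ u, exp (-u ^ 2) = √π := by simpa using integral_gaussian 1
  have hCS := integral_comp_mul_sub_div_Ioi (fun u => exp (-u ^ 2)) hr hb
  simp_rw [add_mul] at hCS
  rw [integral_add (hK0.const_mul r) hKb, hsym, integral_const_mul, hgauss] at hCS
  rw [eq_div_iff (by positivity)]
  linarith

theorem integral_div_sq_mul_exp_neg_sq_mul_sub_div (hr : 0 < r) (hb : 0 ≤ b) :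
    ∫ s in Ioi (0:ℝ), (b / s) ^ 2 * exp (-(r * s - b / s) ^ 2) = b * √π / 2 := by
  rcases hb.eq_or_lt with rfl | hb
  · simp
  rw [← integral_comp_div_Ioi _ (div_pos hb hr)]
  have hsym : ∀ s ∈ Ioi (0:ℝ), b / r / s ^ 2 * ((b / (b / r / s)) ^ 2
      * exp (-(r * (b / r / s) - b / (b / r / s)) ^ 2)) = b * r * exp (-(r * s - b / s) ^ 2) :=
    fun s (hs : 0 < s) => by
      rw [mul_div_div_sub_div_div hr.ne' hb.ne' hs.ne', neg_sq]
      field_simp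
  rw [setIntegral_congr_fun measurableSet_Ioi hsym, integral_const_mul,
    integral_exp_neg_sq_mul_sub_div hr hb.le]
  field_simp

theorem hasDerivAt_mul_exp_neg_sq_mul_sub_div {s : ℝ} (hs : s ≠ 0) :
    HasDerivAt (fun s => s * exp (-(r * s - b / s) ^ 2))
      (exp (-(r * s - b / s) ^ 2) - 2 * r ^ 2 * (s ^ 2 * exp (-(r * s - b / s) ^ 2))
        + 2 * ((b / s) ^ 2 * exp (-(r * s - b / s) ^ 2))) s := by
  refine ((hasDerivAt_id s).fun_mul
    ((hasDerivAt_mul_sub_div (r := r) (b := b) hs).fun_pow 2).fun_neg.exp).congr_deriv ?_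
  simp only [id]
  field_simp
  linear_combination (2 * b ^ 2 - 2 * r ^ 2 * s ^ 4) * mul_inv_cancel₀ hs

theorem continuousWithinAt_mul_exp_neg_sq_mul_sub_div :
    ContinuousWithinAt (fun s => s * exp (-(r * s - b / s) ^ 2)) (Ici 0) 0 := by
  rw [ContinuousWithinAt, zero_mul]
  refine squeeze_zero_norm (fun s => ?_)
    ((continuous_abs.tendsto' 0 0 abs_zero).mono_left nhdsWithin_le_nhds)
  rw [norm_mul, norm_of_nonneg (exp_pos _).le, norm_eq_abs]
  exact mul_le_of_le_one_right (abs_nonneg s) (exp_le_one_iff.mpr (neg_nonpos.mpr (sq_nonneg _)))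

theorem integral_sq_mul_exp_neg_sq_mul_sub_div (hr : 0 < r) (hb : 0 ≤ b) :
    ∫ s in Ioi (0:ℝ), s ^ 2 * exp (-(r * s - b / s) ^ 2)
      = √π * (1 + 2 * r * b) / (4 * r ^ 3) := by
  have hderiv := fun s (hs : s ∈ Ioi (0:ℝ)) =>
    hasDerivAt_mul_exp_neg_sq_mul_sub_div (r := r) (b := b) (ne_of_gt hs)
  have hK0 : IntegrableOn (fun s => exp (-(r * s - b / s) ^ 2)) (Ioi 0) := by
    simpa using integrableOn_pow_mul_exp_neg_sq_mul_sub_div (b := b) hr.ne' 0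
  have hK2 := (integrableOn_pow_mul_exp_neg_sq_mul_sub_div (b := b) hr.ne' 2).const_mul (2 * r ^ 2)
  have hKb := (integrableOn_div_sq_mul_exp_neg_sq_mul_sub_div (b := b) hr.ne').const_mul 2
  have hint := (hK0.sub' hK2).fun_add hKb
  have htendsto : Tendsto (fun s => s * exp (-(r * s - b / s) ^ 2)) atTop (𝓝 0) :=
    tendsto_zero_of_hasDerivAt_of_integrableOn_Ioi hderiv hint
      (by simpa using integrableOn_pow_mul_exp_neg_sq_mul_sub_div (b := b) hr.ne' 1)
  have hFTC := integral_Ioi_of_hasDerivAt_of_tendsto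
    continuousWithinAt_mul_exp_neg_sq_mul_sub_div hderiv hint htendsto
  rw [integral_add (hK0.sub' hK2) hKb, integral_sub hK0 hK2, integral_const_mul, integral_const_mul,
    integral_exp_neg_sq_mul_sub_div hr hb, integral_div_sq_mul_exp_neg_sq_mul_sub_div hr hb,
    zero_mul, sub_zero] at hFTC
  generalize ∫ s in Ioi (0:ℝ), s ^ 2 * exp (-(r * s - b / s) ^ 2) = K at hFTC ⊢
  field_simp at hFTC ⊢
  linear_combination -hFTC

end

/-- For α > 0 and a ≥ 0,
∫₀^∞ t e^{-αt} e^{-a²/(2t)} / √(2πt) dt = e^{-√(2α) a}(1/(2α√(2α)) + a/(2α)). -/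
theorem stmt2 (α a : ℝ) (hα : 0 < α) (ha : 0 ≤ a) :
    ∫ t in Ioi (0:ℝ),
        t * Real.exp (-α * t) * Real.exp (-a ^ 2 / (2 * t)) / Real.sqrt (2 * π * t)
      = Real.exp (-Real.sqrt (2 * α) * a)
          * (1 / (2 * α * Real.sqrt (2 * α)) + a / (2 * α)) := by
  obtain ⟨r, hr, rfl⟩ : ∃ r, 0 < r ∧ r ^ 2 = α := ⟨√α, sqrt_pos.mpr hα, sq_sqrt hα.le⟩
  obtain ⟨b, hb, rfl⟩ : ∃ b, 0 ≤ b ∧ √2 * b = a := ⟨a / √2, by positivity, by field_simp⟩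
  have hsqrt2 : √2 ^ 2 = 2 := sq_sqrt zero_le_two
  have hexponent : ∀ s ≠ 0, -r ^ 2 * s ^ 2 + -(√2 * b) ^ 2 / (2 * s ^ 2)
      = -(2 * r * b) + -(r * s - b / s) ^ 2 := fun s hs => by
    field_simp
    linear_combination (-b ^ 2) * hsqrt2
  have hintegrand : ∀ s ∈ Ioi (0:ℝ), 2 * s * (s ^ 2 * exp (-r ^ 2 * s ^ 2)
      * exp (-(√2 * b) ^ 2 / (2 * s ^ 2)) / √(2 * π * s ^ 2))
        = 2 / √(2 * π) * exp (-(2 * r * b)) * (s ^ 2 * exp (-(r * s - b / s) ^ 2)) := by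
    intro s (hs : 0 < s)
    rw [sqrt_mul (by positivity), sqrt_sq hs.le, mul_assoc (s ^ 2), ← exp_add,
      hexponent s hs.ne', exp_add]
    field_simp
  rw [← integral_comp_sq_Ioi, setIntegral_congr_fun measurableSet_Ioi hintegrand,
    integral_const_mul, integral_sq_mul_exp_neg_sq_mul_sub_div hr hb, sqrt_mul zero_le_two,
    sqrt_mul zero_le_two, sqrt_sq hr.le]
  field_simp
  rw [hsqrt2]
  ring
end

section
/- (Verification theorem via resolvents, deterministic skeleton) Let K ⊆ ℝ, let R_α be a positive linear operator on bounded measurable functions on K satisfying, for a strong Markov process X and all stopping times τ, the Fukushima–Dynkin identity E_x[e^{-ατ} R_α ψ(X_τ)] = R_α ψ(x) − E_x[∫₀^τ e^{-αt} ψ(X_t) dt]. If ψ satisfies R_α ψ ≥ g and ψ ≥ f on K, then for every stopping time τ, R_α ψ(x) ≥ E_x[∫₀^τ e^{-αt} f(X_t) dt + e^{-ατ} g(X_τ)]; hence R_α ψ(x) ≥ sup_τ J_α^τ(x). -/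
open MeasureTheory Real Set

/-- Verification theorem via resolvents (easy inequality): if the
Fukushima–Dynkin identity holds for the resolvent Rψ, and Rψ ≥ g, ψ ≥ f on
the state space K, then for every stopping time τ,
Rψ(x) ≥ E_x[∫₀^τ e^{-αt} f(X_t) dt + e^{-ατ} g(X_τ)]. -/
theorem stmt19 {Ω : Type*} [MeasurableSpace Ω]
    (K : Set ℝ) (P : ℝ → Measure Ω) (hP : ∀ x, IsProbabilityMeasure (P x))
    (X : ℝ → Ω → ℝ) (hX : ∀ t ω, X t ω ∈ K)
    (α : ℝ) (hα : 0 < α)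
    (f g ψ Rψ : ℝ → ℝ)
    (hRg : ∀ y ∈ K, g y ≤ Rψ y)
    (hfψ : ∀ y ∈ K, f y ≤ ψ y)
    (τ : Ω → ℝ) (hτ : ∀ ω, 0 ≤ τ ω)
    -- Fukushima–Dynkin identity for the resolvent Rψ:
    (hdynkin : ∀ x ∈ K,
      ∫ ω, Real.exp (-α * τ ω) * Rψ (X (τ ω) ω) ∂(P x)
        = Rψ x - ∫ ω, (∫ t in Ioc (0:ℝ) (τ ω), Real.exp (-α * t) * ψ (X t ω)) ∂(P x))
    -- integrability of the relevant expectations: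
    (hint₁ : ∀ x ∈ K, Integrable
      (fun ω => ∫ t in Ioc (0:ℝ) (τ ω), Real.exp (-α * t) * ψ (X t ω)) (P x))
    (hint₂ : ∀ x ∈ K, Integrable
      (fun ω => ∫ t in Ioc (0:ℝ) (τ ω), Real.exp (-α * t) * f (X t ω)) (P x))
    (hint₃ : ∀ x ∈ K, Integrable
      (fun ω => Real.exp (-α * τ ω) * Rψ (X (τ ω) ω)) (P x))
    (hint₄ : ∀ x ∈ K, Integrable
      (fun ω => Real.exp (-α * τ ω) * g (X (τ ω) ω)) (P x))
    -- pathwise integrability of the time integrals: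
    (hpath : ∀ ω, IntegrableOn (fun t => Real.exp (-α * t) * ψ (X t ω)) (Ioc 0 (τ ω)))
    (hpathf : ∀ ω, IntegrableOn (fun t => Real.exp (-α * t) * f (X t ω)) (Ioc 0 (τ ω))) :
    ∀ x ∈ K,
      (∫ ω, ((∫ t in Ioc (0:ℝ) (τ ω), Real.exp (-α * t) * f (X t ω))
          + Real.exp (-α * τ ω) * g (X (τ ω) ω)) ∂(P x)) ≤ Rψ x := by
  intro x hx
  have key : (∫ ω, ((∫ t in Ioc (0:ℝ) (τ ω), Real.exp (-α * t) * ψ (X t ω))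
      + Real.exp (-α * τ ω) * Rψ (X (τ ω) ω)) ∂(P x)) = Rψ x := by
    rw [integral_add (hint₁ x hx) (hint₃ x hx), hdynkin x hx]
    ring
  calc (∫ ω, ((∫ t in Ioc (0:ℝ) (τ ω), Real.exp (-α * t) * f (X t ω))
          + Real.exp (-α * τ ω) * g (X (τ ω) ω)) ∂(P x))
      ≤ (∫ ω, ((∫ t in Ioc (0:ℝ) (τ ω), Real.exp (-α * t) * ψ (X t ω))
          + Real.exp (-α * τ ω) * Rψ (X (τ ω) ω)) ∂(P x)) := by
        apply integral_mono ((hint₂ x hx).add (hint₄ x hx))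
          ((hint₁ x hx).add (hint₃ x hx))
        intro ω
        apply add_le_add
        · exact setIntegral_mono_on (hpathf ω) (hpath ω) measurableSet_Ioc
            (fun t _ => mul_le_mul_of_nonneg_left (hfψ _ (hX t ω)) (Real.exp_pos _).le)
        · exact mul_le_mul_of_nonneg_left (hRg _ (hX _ ω)) (Real.exp_pos _).le
    _ = Rψ x := key
end
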